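/- arXiv:2208.08838 — 3 statements merged into one kernel-verified Lean document; each statement's English description precedes it below -/
import Mathlib

section
/- Let A be a finite dimensional k-algebra and let M, N be families of finite dimensional A-modules with N hyperfinite. If there exists H ≥ 0 such that every module M in the family M has a submodule N ∈ N with dim_k M - dim_k N ≤ H, then the family M is also hyperfinite. -/
/-- A bundled finite (dimensional) module over the `k`-algebra `A`. -/
structure FDMod (k A : Type) [Field k] [Ring A] [Algebra k A] where
  carrier : Type
  [acg : AddCommGroup carrier]
  [mod : Module A carrier]
  [fin : Module.Finite A carrier]

attribute [instance] FDMod.acg FDMod.mod FDMod.fin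

/-- The dimension over `k` of an `A`-module (via restriction of scalars). -/
noncomputable def kdim (k A : Type) [Field k] [Ring A] [Algebra k A]
    (X : Type) [AddCommGroup X] [Module A X] : ℕ :=
  Module.finrank k (RestrictScalars k A X)

/-- A family of `A`-modules is hyperfinite if for every `ε > 0` there is `L_ε > 0` such
that every member `M` has a submodule `N` with `dim N ≥ (1-ε)·dim M` which is the
(internal) direct sum of submodules of `k`-dimension at most `L_ε`. -/
def Hyperfinite (k A : Type) [Field k] [Ring A] [Algebra k A]
    (ℳ : Set (FDMod k A)) : Prop :=
  ∀ ε : ℝ, 0 < ε → ∃ L : ℕ, 0 < L ∧ ∀ M ∈ ℳ,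
    ∃ N : Submodule A M.carrier,
      (1 - ε) * (kdim k A M.carrier : ℝ) ≤ (kdim k A N : ℝ) ∧
      ∃ (t : ℕ) (P : Fin t → Submodule A M.carrier),
        (∀ i, P i ≤ N) ∧ iSup P = N ∧ iSupIndep P ∧
        ∀ i, kdim k A (P i) ≤ L

/-!
Given `ε`, decompose the members of `𝒩` with tolerance `ε / 2`. A member `M` of `ℳ` of
dimension at most `2H / ε` is itself a single small piece. A larger `M` contains a copy of some
`N' ∈ 𝒩` of codimension at most `H < (ε / 2) dim M`, and the decomposition of `N'`
transported into `M` has dimension at least `(1 - ε / 2) (dim M - H) ≥ (1 - ε) dim M` (for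
`ε < 2`; otherwise there is nothing to prove).
-/

section

variable {k A : Type} [Field k] [Ring A] [Algebra k A]

theorem kdim_congr {X Y : Type} [AddCommGroup X] [Module A X] [AddCommGroup Y] [Module A Y]
    (e : X ≃ₗ[A] Y) : kdim k A X = kdim k A Y :=
  LinearEquiv.finrank_eq <| AddEquiv.toLinearEquiv (R := k)
    ((RestrictScalars.addEquiv k A X).trans
      (e.toAddEquiv.trans (RestrictScalars.addEquiv k A Y).symm))
    fun c x => by simp [RestrictScalars.smul_def]

theorem kdim_map_of_injective {X Y : Type} [AddCommGroup X] [Module A X] [AddCommGroup Y]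
    [Module A Y] {f : X →ₗ[A] Y} (hf : Function.Injective f) (Q : Submodule A X) :
    kdim k A (Q.map f) = kdim k A Q :=
  (kdim_congr (Submodule.equivMapOfInjective f hf Q)).symm

theorem kdim_top (X : Type) [AddCommGroup X] [Module A X] :
    kdim k A (⊤ : Submodule A X) = kdim k A X :=
  kdim_congr Submodule.topEquiv

def HasBoundedDecomposition (k : Type) {A X : Type} [Field k] [Ring A] [Algebra k A]
    [AddCommGroup X] [Module A X] (L : ℕ) (N : Submodule A X) : Prop :=
  ∃ (t : ℕ) (P : Fin t → Submodule A X),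
    (∀ i, P i ≤ N) ∧ iSup P = N ∧ iSupIndep P ∧ ∀ i, kdim k A (P i) ≤ L

namespace HasBoundedDecomposition

variable {X Y : Type} [AddCommGroup X] [Module A X] [AddCommGroup Y] [Module A Y]
  {L L' : ℕ} {N : Submodule A X}

theorem mono (h : HasBoundedDecomposition k L N) (hL : L ≤ L') :
    HasBoundedDecomposition k L' N :=
  let ⟨t, P, hle, hsup, hind, hdim⟩ := h
  ⟨t, P, hle, hsup, hind, fun i => (hdim i).trans hL⟩

theorem map (h : HasBoundedDecomposition k L N) {f : X →ₗ[A] Y} (hf : Function.Injective f) :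
    HasBoundedDecomposition k L (N.map f) :=
  let ⟨t, P, hle, hsup, hind, hdim⟩ := h
  ⟨t, fun i => (P i).map f, fun i => Submodule.map_mono (hle i),
    by rw [← Submodule.map_iSup, hsup], f.iSupIndep_map hf hind,
    fun i => (kdim_map_of_injective hf (P i)).trans_le (hdim i)⟩

theorem top (h : kdim k A X ≤ L) : HasBoundedDecomposition k L (⊤ : Submodule A X) :=
  ⟨1, fun _ => ⊤, fun _ => le_rfl, iSup_const, iSupIndep_subsingleton _,
    fun _ => (kdim_top X).trans_le h⟩

end HasBoundedDecomposition

theorem one_sub_mul_le_of_le_add {ε m n r H : ℝ} (hr : 0 ≤ r)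
    (hrn : (1 - ε / 2) * n ≤ r) (hmn : m ≤ n + H) (hH : 0 ≤ H) (hHm : 2 * H < ε * m) :
    (1 - ε) * m ≤ r := by
  nlinarith

end

theorem stmt0_general {k A : Type} [Field k] [Ring A] [Algebra k A]
    (ℳ 𝒩 : Set (FDMod k A)) (hN : Hyperfinite k A 𝒩) (H : ℕ)
    (h : ∀ M ∈ ℳ, ∃ (N : Submodule A M.carrier) (N' : FDMod k A), N' ∈ 𝒩 ∧
      Nonempty (N ≃ₗ[A] N'.carrier) ∧
      kdim k A M.carrier ≤ kdim k A N + H) :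
    Hyperfinite k A ℳ := by
  intro ε hε
  obtain ⟨L, hL, hN⟩ := hN (ε / 2) (by positivity)
  refine ⟨max L ⌈2 * H / ε⌉₊, lt_max_of_lt_left hL, fun M hM => ?_⟩
  obtain ⟨N, N', hN', ⟨e⟩, hcodim⟩ := h M hM
  by_cases hsmall : (kdim k A M.carrier : ℝ) ≤ 2 * H / ε
  · refine ⟨⊤, ?_, (HasBoundedDecomposition.top ?_).mono (le_max_right _ _)⟩
    · rw [kdim_top]
      nlinarith [(kdim k A M.carrier).cast_nonneg (α := ℝ)]
    · exact_mod_cast hsmall.trans (Nat.le_ceil _)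
  · obtain ⟨N'', hdim, hdec⟩ := hN N' hN'
    have hf : Function.Injective (N.subtype ∘ₗ e.symm.toLinearMap) :=
      N.injective_subtype.comp e.symm.injective
    refine ⟨N''.map _, ?_, (HasBoundedDecomposition.map hdec hf).mono (le_max_left _ _)⟩
    rw [kdim_map_of_injective hf]
    rw [kdim_congr e] at hcodim
    refine one_sub_mul_le_of_le_add (Nat.cast_nonneg _) hdim (by exact_mod_cast hcodim)
      (Nat.cast_nonneg _) ?_
    rw [not_le, div_lt_iff₀ hε] at hsmall
    linarith

/-- If every member of `ℳ` has a submodule of codimension at most `H`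
isomorphic to a member of the hyperfinite family `𝒩`, then `ℳ` is hyperfinite. -/
theorem stmt0 {k A : Type} [Field k] [Ring A] [Algebra k A] [FiniteDimensional k A]
    (ℳ 𝒩 : Set (FDMod k A)) (hN : Hyperfinite k A 𝒩) (H : ℕ)
    (h : ∀ M ∈ ℳ, ∃ (N : Submodule A M.carrier) (N' : FDMod k A), N' ∈ 𝒩 ∧
      Nonempty (N ≃ₗ[A] N'.carrier) ∧
      kdim k A M.carrier ≤ kdim k A N + H) :
    Hyperfinite k A ℳ :=
  stmt0_general ℳ 𝒩 hN H h
end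

section
/- If M is an indecomposable finite dimensional representation of a quiver Q and B is any basis of M (a union of bases of the vector spaces at each vertex), then the coefficient quiver Γ(M,B) is connected. -/
/-- A quiver: vertices, arrows, source and target maps. -/
structure QuiverData where
  Q0 : Type
  Q1 : Type
  src : Q1 → Q0
  tgt : Q1 → Q0

/-- A `k`-linear representation of the quiver `Q`. -/
structure RepOf (k : Type) [Field k] (Q : QuiverData) where
  V : Q.Q0 → Type
  [acg : ∀ q, AddCommGroup (V q)]
  [mod : ∀ q, Module k (V q)]
  f : ∀ a : Q.Q1, V (Q.src a) →ₗ[k] V (Q.tgt a)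

attribute [instance] RepOf.acg RepOf.mod

/-- A subrepresentation: a family of subspaces invariant under all arrow maps. -/
structure SubRep {k : Type} [Field k] {Q : QuiverData} (M : RepOf k Q) where
  U : ∀ q, Submodule k (M.V q)
  inv : ∀ a : Q.Q1, (U (Q.src a)).map (M.f a) ≤ U (Q.tgt a)

/-- A representation is indecomposable if it is nonzero and admits no decomposition into
two componentwise complementary nonzero subrepresentations. -/
def IsIndec {k : Type} [Field k] {Q : QuiverData} (M : RepOf k Q) : Prop :=
  (∃ q, ∃ x : M.V q, x ≠ 0) ∧
  ∀ U W : SubRep M, (∀ q, IsCompl (U.U q) (W.U q)) →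
    (∀ q, U.U q = ⊥) ∨ (∀ q, W.U q = ⊥)

/-- There is an arrow `a` whose matrix entry at `(x, y)` with respect to the basis `B`
is nonzero (an arrow `x → y` in the coefficient quiver). -/
def coeffRelA {k : Type} [Field k] {Q : QuiverData} (M : RepOf k Q) {ι : Q.Q0 → Type}
    (B : ∀ q, Module.Basis (ι q) k (M.V q)) (a : Q.Q1) (x y : Σ q, ι q) : Prop :=
  ∃ (hx : x.1 = Q.src a) (hy : y.1 = Q.tgt a),
    ((B (Q.tgt a)).repr ((M.f a) ((B (Q.src a)) (hx ▸ x.2)))) (hy ▸ y.2) ≠ 0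

/-- There is an arrow `x → y` in the coefficient quiver `Γ(M, B)`. -/
def coeffRel {k : Type} [Field k] {Q : QuiverData} (M : RepOf k Q) {ι : Q.Q0 → Type}
    (B : ∀ q, Module.Basis (ι q) k (M.V q)) (x y : Σ q, ι q) : Prop :=
  ∃ a : Q.Q1, coeffRelA M B a x y

/-- The underlying (simple) graph of the coefficient quiver `Γ(M, B)`. -/
def coeffGraph {k : Type} [Field k] {Q : QuiverData} (M : RepOf k Q) {ι : Q.Q0 → Type}
    (B : ∀ q, Module.Basis (ι q) k (M.V q)) : SimpleGraph (Σ q, ι q) where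
  Adj x y := x ≠ y ∧ (coeffRel M B x y ∨ coeffRel M B y x)
  symm := ⟨by rintro x y ⟨h1, h2⟩; exact ⟨h1.symm, h2.symm⟩⟩
  loopless := ⟨fun x h => h.1 rfl⟩

/-!
Split the basis `B` into the vertices reachable from a fixed basis vector `x` in `Γ(M, B)` and
the rest. A nonzero matrix entry joins two basis vectors, which are then reachable from `x`
together or not at all, so the spans of the two halves are complementary subrepresentations.
Indecomposability kills one of them; it cannot be the one containing `x`, so every basis
vector is reachable from `x`.
-/

theorem Module.Basis.isCompl_span_image_compl {R V ι : Type*} [Semiring R] [AddCommMonoid V]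
    [Module R V] (b : Module.Basis ι R V) (s : Set ι) :
    IsCompl (Submodule.span R (b '' s)) (Submodule.span R (b '' sᶜ)) := by
  constructor
  · rw [Submodule.disjoint_def]
    intro v hv hv'
    rw [Module.Basis.mem_span_image] at hv hv'
    have hsupp : (b.repr v).support = ∅ :=
      Finset.eq_empty_of_forall_notMem fun i hi => hv' hi (hv hi)
    exact b.repr.map_eq_zero_iff.mp (Finsupp.support_eq_empty.mp hsupp)
  · rw [codisjoint_iff, ← Submodule.span_union, ← Set.image_union,
      Set.union_compl_self, Set.image_univ, b.span_eq]

theorem Module.Basis.span_image_eq_bot_iff {R V ι : Type*} [Semiring R] [Nontrivial R]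
    [AddCommMonoid V] [Module R V] (b : Module.Basis ι R V) {s : Set ι} :
    Submodule.span R (b '' s) = ⊥ ↔ s = ∅ := by
  rw [Submodule.span_eq_bot, Set.forall_mem_image, Set.eq_empty_iff_forall_notMem]
  exact forall_congr' fun i => imp_congr_right fun _ => iff_of_false (b.ne_zero i) id

theorem IsIndec.nonempty_basis_index {k : Type} [Field k] {Q : QuiverData} {M : RepOf k Q}
    (hM : IsIndec M) {ι : Q.Q0 → Type} (B : ∀ q, Module.Basis (ι q) k (M.V q)) :
    Nonempty (Σ q, ι q) := by
  obtain ⟨q, v, hv⟩ := hM.1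
  obtain ⟨i, -⟩ := Finsupp.ne_iff.mp fun h => hv ((B q).repr.map_eq_zero_iff.mp h)
  exact ⟨⟨q, i⟩⟩

section CoeffClosed

variable {k : Type} [Field k] {Q : QuiverData} (M : RepOf k Q) {ι : Q.Q0 → Type}
  (B : ∀ q, Module.Basis (ι q) k (M.V q))

def IsCoeffClosed (S : ∀ q, Set (ι q)) : Prop :=
  ∀ (a : Q.Q1) (i : ι (Q.src a)) (j : ι (Q.tgt a)),
    (B (Q.tgt a)).repr (M.f a (B (Q.src a) i)) j ≠ 0 → (i ∈ S (Q.src a) ↔ j ∈ S (Q.tgt a))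

variable {M B}

def SubRep.spanBasis (S : ∀ q, Set (ι q))
    (hS : ∀ (a : Q.Q1) (i : ι (Q.src a)) (j : ι (Q.tgt a)),
      (B (Q.tgt a)).repr (M.f a (B (Q.src a) i)) j ≠ 0 → i ∈ S (Q.src a) → j ∈ S (Q.tgt a)) :
    SubRep M where
  U q := Submodule.span k (B q '' S q)
  inv a := by
    rw [Submodule.map_span_le]
    rintro _ ⟨i, hi, rfl⟩
    rw [Module.Basis.mem_span_image]
    exact fun j hj => hS a i j (Finsupp.mem_support_iff.mp hj) hi

theorem IsCoeffClosed.compl {S : ∀ q, Set (ι q)} (hS : IsCoeffClosed M B S) :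
    IsCoeffClosed M B fun q => (S q)ᶜ :=
  fun a i j hij => not_congr (hS a i j hij)

theorem IsIndec.eq_empty_or_eq_univ_of_isCoeffClosed (hM : IsIndec M) {S : ∀ q, Set (ι q)}
    (hS : IsCoeffClosed M B S) : (∀ q, S q = ∅) ∨ (∀ q, S q = Set.univ) := by
  let U := SubRep.spanBasis S fun a i j hij => (hS a i j hij).mp
  let W := SubRep.spanBasis (fun q => (S q)ᶜ) fun a i j hij => (hS.compl a i j hij).mp
  exact (hM.2 U W fun q => (B q).isCompl_span_image_compl (S q)).imp
    (fun h q => (B q).span_image_eq_bot_iff.mp (h q))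
    (fun h q => Set.compl_empty_iff.mp ((B q).span_image_eq_bot_iff.mp (h q)))

theorem isCoeffClosed_reachable (x : Σ q, ι q) :
    IsCoeffClosed M B fun q => {i | (coeffGraph M B).Reachable x ⟨q, i⟩} := by
  intro a i j hij
  by_cases heq : (⟨Q.src a, i⟩ : Σ q, ι q) = ⟨Q.tgt a, j⟩
  · exact iff_of_eq (congrArg ((coeffGraph M B).Reachable x) heq)
  · have hadj : (coeffGraph M B).Adj ⟨Q.src a, i⟩ ⟨Q.tgt a, j⟩ :=
      ⟨heq, Or.inl ⟨a, rfl, rfl, hij⟩⟩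
    exact ⟨fun h => h.trans hadj.reachable, fun h => h.trans hadj.symm.reachable⟩

end CoeffClosed

theorem stmt2_general {k : Type} [Field k] {Q : QuiverData} (M : RepOf k Q)
    (hM : IsIndec M)
    {ι : Q.Q0 → Type} (B : ∀ q, Module.Basis (ι q) k (M.V q)) :
    (coeffGraph M B).Connected := by
  refine (SimpleGraph.connected_iff _).mpr ⟨fun x y => ?_, hM.nonempty_basis_index B⟩
  rcases hM.eq_empty_or_eq_univ_of_isCoeffClosed (isCoeffClosed_reachable x) with h | h
  · exact (Set.eq_empty_iff_forall_notMem.mp (h x.1) x.2 (SimpleGraph.Reachable.refl x)).elim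
  · exact Set.eq_univ_iff_forall.mp (h y.1) y.2

/-- If `M` is an indecomposable finite dimensional representation of a
quiver `Q` and `B` is any basis of `M` (one basis of the vector space at each vertex),
then the coefficient quiver `Γ(M, B)` is connected. -/
theorem stmt2 {k : Type} [Field k] {Q : QuiverData} (M : RepOf k Q)
    [∀ q, FiniteDimensional k (M.V q)] (hM : IsIndec M)
    {ι : Q.Q0 → Type} (B : ∀ q, Module.Basis (ι q) k (M.V q)) :
    (coeffGraph M B).Connected :=
  stmt2_general M hM B
end

section
/- Let G be a graph obtained from a cycle graph on vertex classes V₀, …, V_{n-1} (each of size m, with edges only of the form v_{i,j} — v_{i,j±1 mod n}, at most two per vertex per adjacent class, plus loops) by replacing the edges between class V₁ and class V₀ with the edges of a forest mapping pattern u_i — v_{i+1,0} (i = 1, …, m−1) on a subset of m−1 vertices of V₁. Then G is planar. -/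
/-- `H` is a minor of `G`: there are pairwise disjoint connected branch sets in `G`,
one for each vertex of `H`, joined by edges of `G` whenever the corresponding vertices
are adjacent in `H`. -/
def SimpleGraph.HasMinor {V W : Type} (G : SimpleGraph V) (H : SimpleGraph W) : Prop :=
  ∃ β : W → Set V,
    (∀ w, (G.induce (β w)).Connected) ∧
    Pairwise (Function.onFun Disjoint β) ∧
    ∀ ⦃w w'⦄, H.Adj w w' → ∃ v ∈ β w, ∃ v' ∈ β w', G.Adj v v'

/-- Planarity of a graph, via Wagner's theorem: no `K₅` minor and no `K₃,₃` minor. -/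
def SimpleGraph.IsPlanar {V : Type} (G : SimpleGraph V) : Prop :=
  ¬ G.HasMinor (completeGraph (Fin 5)) ∧
  ¬ G.HasMinor (completeBipartiteGraph (Fin 3) (Fin 3))

/-! By Wagner's criterion, and since both `K₅` and `K₃,₃` contract to `K₄`, it suffices to exclude
a `K₄` minor. Each level `j` is a path (a strand) through the classes `1, 2, …, n - 1, 0`, and
strands are joined to one another only across the gap between classes `0` and `1`.

Choose the branch set whose highest level `t` is least. A branch set avoiding the (at most two)
gap vertices of level `t` cannot cross level `t`; it cannot lie in the interior of strand `t`,
since such a set has only two outer neighbours while a branch set of a `K₄` model needs three;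
and it reaches level `t`. So it lies strictly above `t`, and the lowest branch set can only
touch it through an edge from a gap vertex of level `t` to that vertex's unique neighbour at
level `t + 1`. Hence each of the three other branch sets claims a gap vertex of level `t`, and
no two of them claim the same one. -/

open Set

theorem encard_le_two_of_injOn_bool {α : Type*} {s : Set α} (f : α → Bool) (hf : InjOn f s) :
    s.encard ≤ 2 := by
  calc s.encard ≤ (univ : Set Bool).encard := encard_le_encard_of_injOn (mapsTo_univ f s) hf
    _ = 2 := by simp [encard_pair]

theorem three_le_encard_of_exclusive {α : Type*} {s : Set α} (k : Fin 4) (P : Fin 4 → α → Prop)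
    (hP : ∀ i ≠ k, ∃ x ∈ s, P i x)
    (hexcl : ∀ i ≠ k, ∀ j ≠ k, i ≠ j → ∀ x, P i x → P j x → False) :
    3 ≤ s.encard := by
  have hothers : ∀ k : Fin 4, ∃ i j l : Fin 4, i ≠ j ∧ i ≠ l ∧ j ≠ l ∧ i ≠ k ∧ j ≠ k ∧ l ≠ k := by
    decide
  obtain ⟨i, j, l, hij, hil, hjl, hik, hjk, hlk⟩ := hothers k
  obtain ⟨x, hx, hPx⟩ := hP i hik
  obtain ⟨y, hy, hPy⟩ := hP j hjk
  obtain ⟨z, hz, hPz⟩ := hP l hlk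
  have hxy : x ≠ y := by rintro rfl; exact hexcl i hik j hjk hij x hPx hPy
  have hxz : x ≠ z := by rintro rfl; exact hexcl i hik l hlk hil x hPx hPz
  have hyz : y ≠ z := by rintro rfl; exact hexcl j hjk l hlk hjl y hPy hPz
  calc (3 : ℕ∞) = ({x, y, z} : Set α).encard :=
        (encard_eq_three.2 ⟨x, y, z, hxy, hxz, hyz, rfl⟩).symm
    _ ≤ s.encard := encard_le_encard (by simp [insert_subset_iff, hx, hy, hz])

theorem exists_minimax_level {ι α : Type*} [Finite ι] [Nonempty ι] [Finite α] (β : ι → Set α)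
    (hβ : ∀ i, (β i).Nonempty) (f : α → ℕ) :
    ∃ i₀ t, (∀ x ∈ β i₀, f x ≤ t) ∧ ∀ i, ∃ x ∈ β i, t ≤ f x := by
  choose top htop hmax using fun i => (β i).exists_max_image f (toFinite _) (hβ i)
  obtain ⟨i₀, hi₀⟩ := Finite.exists_min fun i => f (top i)
  exact ⟨i₀, f (top i₀), hmax i₀, fun i => ⟨top i, htop i, hi₀ i⟩⟩

namespace SimpleGraph

variable {V : Type} {G : SimpleGraph V}

def outerNbhd (G : SimpleGraph V) (S : Set V) : Set V := {v | v ∉ S ∧ ∃ u ∈ S, G.Adj u v}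

theorem exists_adj_of_preconnected_induce {S T : Set V} (hS : (G.induce S).Preconnected)
    {u v : V} (hu : u ∈ S) (hv : v ∈ S) (huT : u ∈ T) (hvT : v ∉ T) :
    ∃ x ∈ S, ∃ y ∈ S, x ∈ T ∧ y ∉ T ∧ G.Adj x y := by
  obtain ⟨p⟩ := hS ⟨u, hu⟩ ⟨v, hv⟩
  obtain ⟨d, -, hd₁, hd₂⟩ := p.exists_boundary_dart (Subtype.val ⁻¹' T) huT hvT
  exact ⟨d.fst, d.fst.2, d.snd, d.snd.2, hd₁, hd₂, d.adj⟩

theorem eq_of_preconnected_induce {α : Type*} {S : Set V} (hS : (G.induce S).Preconnected)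
    (g : V → α) (hg : ∀ x ∈ S, ∀ y ∈ S, G.Adj x y → g x = g y) {u v : V} (hu : u ∈ S)
    (hv : v ∈ S) : g u = g v := by
  by_contra hne
  obtain ⟨x, hx, y, hy, hxT, hyT, hxy⟩ :=
    exists_adj_of_preconnected_induce (T := {x | g x = g u}) hS hu hv rfl (Ne.symm hne)
  exact hyT ((hg x hx y hy hxy).symm.trans hxT)

theorem ordConnected_image_of_preconnected_induce {S : Set V} (hS : (G.induce S).Preconnected)
    (f : V → ℕ) (hf : ∀ x ∈ S, ∀ y ∈ S, G.Adj x y → f y ≤ f x + 1) : (f '' S).OrdConnected := by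
  refine ⟨?_⟩
  rintro _ ⟨u, hu, rfl⟩ _ ⟨v, hv, rfl⟩ c ⟨huc, hcv⟩
  by_contra hc
  have hu' : f u < c := lt_of_le_of_ne huc fun h => hc ⟨u, hu, h⟩
  obtain ⟨x, hx, y, hy, hxT, hyT, hxy⟩ :=
    exists_adj_of_preconnected_induce (T := {x | f x < c}) hS hu hv hu' (not_lt.2 hcv)
  have := hf x hx y hy hxy
  exact hc ⟨y, hy, by simp only [mem_ofPred_eq, not_lt] at hxT hyT; omega⟩

/-- `f '' S` is an interval of `ℕ`, so an outer neighbour sits just below or just above it. -/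
theorem encard_outerNbhd_le_two_of_injOn {S : Set V} (hS : (G.induce S).Connected) (f : V → ℕ)
    (hstep : ∀ u ∈ S, ∀ v, G.Adj u v → f v = f u + 1 ∨ f u = f v + 1)
    (hinj : InjOn f (S ∪ G.outerNbhd S)) : (G.outerNbhd S).encard ≤ 2 := by
  classical
  have hI : (f '' S).OrdConnected := ordConnected_image_of_preconnected_induce hS.preconnected f
    fun x hx y _ hxy => by rcases hstep x hx y hxy with h | h <;> omega
  have hout : ∀ v ∈ G.outerNbhd S, f v ∉ f '' S := by
    rintro v hv ⟨w, hw, hwv⟩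
    exact hv.1 (hinj (Or.inl hw) (Or.inr hv) hwv ▸ hw)
  have hside : ∀ v ∈ G.outerNbhd S, f v + 1 ∉ f '' S → ∃ u ∈ S, f v = f u + 1 := by
    rintro v ⟨-, u, hu, huv⟩ hv
    rcases hstep u hu v huv with h | h
    · exact ⟨u, hu, h⟩
    · exact absurd ⟨u, hu, h⟩ hv
  have hle : ∀ v ∈ G.outerNbhd S, ∀ w ∈ G.outerNbhd S,
      (f v + 1 ∈ f '' S ↔ f w + 1 ∈ f '' S) → f v ≤ f w → f v = f w := by
    intro v hv w hw hvw hvw'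
    by_contra hne
    by_cases hb : f v + 1 ∈ f '' S
    · exact hout w hw (hI.out hb (hvw.1 hb) ⟨by omega, by omega⟩)
    · obtain ⟨u, hu, hvu⟩ := hside v hv hb
      obtain ⟨u', hu', hwu'⟩ := hside w hw (mt hvw.2 hb)
      exact hout v hv (hI.out ⟨u, hu, rfl⟩ ⟨u', hu', rfl⟩ ⟨by omega, by omega⟩)
  refine encard_le_two_of_injOn_bool (fun v => decide (f v + 1 ∈ f '' S)) fun v hv w hw hvw => ?_
  have hvw : f v + 1 ∈ f '' S ↔ f w + 1 ∈ f '' S := by simpa using hvw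
  refine hinj (Or.inr hv) (Or.inr hw) ?_
  rcases le_total (f v) (f w) with h | h
  · exact hle v hv w hw hvw h
  · exact (hle w hw v hv hvw.symm h).symm

theorem three_le_encard_outerNbhd {β : Fin 4 → Set V} (hdisj : Pairwise (Function.onFun Disjoint β))
    (hadj : ∀ ⦃i j⦄, (completeGraph (Fin 4)).Adj i j → ∃ u ∈ β i, ∃ v ∈ β j, G.Adj u v)
    (k : Fin 4) : 3 ≤ (G.outerNbhd (β k)).encard := by
  refine three_le_encard_of_exclusive k (fun i v => v ∈ β i) (fun i hi => ?_)
    fun i _ j _ hij v hvi hvj => Set.disjoint_left.1 (hdisj hij) hvi hvj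
  obtain ⟨u, hu, v, hv, huv⟩ := hadj (Ne.symm hi)
  exact ⟨v, ⟨fun hvk => Set.disjoint_left.1 (hdisj hi) hv hvk, u, hu, huv⟩, hv⟩

theorem HasMinor.of_merge {W W' : Type} {H : SimpleGraph W} {H' : SimpleGraph W'}
    (h : G.HasMinor H) (a b : W' → W) (hab : ∀ k, a k = b k ∨ H.Adj (a k) (b k))
    (hdisj : Pairwise fun k k' => a k ≠ a k' ∧ a k ≠ b k' ∧ b k ≠ a k' ∧ b k ≠ b k')
    (hadj : ∀ ⦃k k'⦄, H'.Adj k k' →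
      H.Adj (a k) (a k') ∨ H.Adj (a k) (b k') ∨ H.Adj (b k) (a k') ∨ H.Adj (b k) (b k')) :
    G.HasMinor H' := by
  obtain ⟨β, hconn, hdisjβ, hadjβ⟩ := h
  refine ⟨fun k => β (a k) ∪ β (b k), fun k => ?_, fun k k' hkk' => ?_, fun k k' hkk' => ?_⟩
  · rcases hab k with h | h
    · show (G.induce (β (a k) ∪ β (b k))).Connected
      rw [h, union_self]
      exact hconn (b k)
    · obtain ⟨x, hx, y, hy, hxy⟩ := hadjβ h
      exact G.connected_induce_union (hconn _).preconnected (hconn _).preconnected hx hy hxy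
  · obtain ⟨h₁, h₂, h₃, h₄⟩ := hdisj hkk'
    exact disjoint_union_left.2 ⟨disjoint_union_right.2 ⟨hdisjβ h₁, hdisjβ h₂⟩,
      disjoint_union_right.2 ⟨hdisjβ h₃, hdisjβ h₄⟩⟩
  · rcases hadj hkk' with h | h | h | h <;> obtain ⟨x, hx, y, hy, hxy⟩ := hadjβ h <;>
      exact ⟨x, by simp [hx], y, by simp [hy], hxy⟩

theorem HasMinor.completeGraph_four_of_five (h : G.HasMinor (completeGraph (Fin 5))) :
    G.HasMinor (completeGraph (Fin 4)) :=
  h.of_merge Fin.castSucc Fin.castSucc (fun _ => Or.inl rfl)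
    (fun _ _ h => by simp [h]) (fun _ _ h => Or.inl (by simpa using h))

theorem HasMinor.completeGraph_four_of_completeBipartiteGraph
    (h : G.HasMinor (completeBipartiteGraph (Fin 3) (Fin 3))) :
    G.HasMinor (completeGraph (Fin 4)) :=
  h.of_merge ![.inl 0, .inl 1, .inl 2, .inr 2] ![.inr 0, .inr 1, .inl 2, .inr 2]
    (fun k => by fin_cases k <;> simp)
    (fun k k' h => by fin_cases k <;> fin_cases k' <;> simp_all)
    (fun k k' h => by fin_cases k <;> fin_cases k' <;> simp_all)

end SimpleGraph

open SimpleGraph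

section ForestGapCycle

variable {n m : ℕ} [NeZero n] {G : SimpleGraph (Fin n × Fin m)}

/-- Vertex `(i, j)` is `v_{i,j}`: it lies in class `i` at level `j`. -/
def IsForestGapCycle (G : SimpleGraph (Fin n × Fin m)) : Prop :=
  ∀ p q : Fin n × Fin m, G.Adj p q →
    (q.1 = p.1 + 1 ∨ p.1 = q.1 + 1) ∧
    (((p.1 = (1 : Fin n) ∧ q.1 = 0) ∨ (q.1 = (1 : Fin n) ∧ p.1 = 0)) →
      ((q.2 : ℕ) = (p.2 : ℕ) + 1 ∨ (p.2 : ℕ) = (q.2 : ℕ) + 1)) ∧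
    (¬((p.1 = (1 : Fin n) ∧ q.1 = 0) ∨ (q.1 = (1 : Fin n) ∧ p.1 = 0)) → p.2 = q.2)

def gapAt (t : ℕ) : Set (Fin n × Fin m) := {v | (v.2 : ℕ) = t ∧ (v.1 = 0 ∨ v.1 = 1)}

/-- Position along the strand of a level, which runs through the classes `1, 2, …, n - 1, 0`. -/
def strandPos (v : Fin n × Fin m) : ℕ := (v.1 - 1 : Fin n)

theorem encard_gapAt_le_two (t : ℕ) : (gapAt t : Set (Fin n × Fin m)).encard ≤ 2 := by
  refine encard_le_two_of_injOn_bool (fun v => decide (v.1 = 0)) fun v hv w hw hvw => ?_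
  have hcls : v.1 = w.1 := by
    rcases hv.2 with hv0 | hv1 <;> rcases hw.2 with hw0 | hw1 <;> simp_all
  exact Prod.ext hcls (Fin.ext (hv.1.trans hw.1.symm))

theorem IsForestGapCycle.snd_eq_of_adj (hG : IsForestGapCycle G) {u v : Fin n × Fin m}
    (h : G.Adj u v) (hu₀ : u.1 ≠ 0) (hu₁ : u.1 ≠ 1) : v.2 = u.2 :=
  ((hG u v h).2.2 (by rintro (⟨h, -⟩ | ⟨-, h⟩) <;> contradiction)).symm

theorem IsForestGapCycle.strandPos_adj (hG : IsForestGapCycle G) {u v : Fin n × Fin m}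
    (h : G.Adj u v) (hu₀ : u.1 ≠ 0) (hu₁ : u.1 ≠ 1) :
    strandPos v = strandPos u + 1 ∨ strandPos u = strandPos v + 1 := by
  unfold strandPos
  rcases (hG u v h).1 with hv | hu
  · left
    rw [hv, add_sub_cancel_right, Fin.val_sub_one_of_ne_zero hu₀]
    have : (u.1 : ℕ) ≠ 0 := Fin.val_ne_zero_iff.2 hu₀
    omega
  · right
    have hv₀ : v.1 ≠ 0 := by rintro hv; simp [hv] at hu; exact hu₁ hu
    rw [hu, add_sub_cancel_right, Fin.val_sub_one_of_ne_zero hv₀]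
    have : (v.1 : ℕ) ≠ 0 := Fin.val_ne_zero_iff.2 hv₀
    omega

theorem IsForestGapCycle.gap_of_adj_of_ne (hG : IsForestGapCycle G) {u v : Fin n × Fin m}
    (h : G.Adj u v) (hne : (u.2 : ℕ) ≠ v.2) :
    ((u.1 = 1 ∧ v.1 = 0) ∨ (v.1 = 1 ∧ u.1 = 0)) ∧
      ((v.2 : ℕ) = u.2 + 1 ∨ (u.2 : ℕ) = v.2 + 1) := by
  have hgap : (u.1 = 1 ∧ v.1 = 0) ∨ (v.1 = 1 ∧ u.1 = 0) := by
    by_contra hgap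
    exact hne (congrArg Fin.val ((hG u v h).2.2 hgap))
  exact ⟨hgap, (hG u v h).2.1 hgap⟩

theorem IsForestGapCycle.eq_of_adj_of_adj (hG : IsForestGapCycle G) {s v w : Fin n × Fin m}
    (hsv : G.Adj s v) (hsw : G.Adj s w) (hvw : v.2 = w.2) (hne : (s.2 : ℕ) ≠ v.2) : v = w := by
  have hv := (hG.gap_of_adj_of_ne hsv hne).1
  have hw := (hG.gap_of_adj_of_ne hsw (by rwa [← hvw])).1
  refine Prod.ext ?_ hvw
  rcases hv with ⟨hs, hv⟩ | ⟨hv, hs⟩ <;> rcases hw with ⟨hs', hw⟩ | ⟨hw, hs'⟩ <;> simp_all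

theorem IsForestGapCycle.compare_eq_of_adj (hG : IsForestGapCycle G) {u v : Fin n × Fin m}
    {t : ℕ} (h : G.Adj u v) (hu : u ∉ gapAt t) (hv : v ∉ gapAt t) :
    compare (u.2 : ℕ) t = compare (v.2 : ℕ) t := by
  by_cases he : (u.2 : ℕ) = v.2
  · rw [he]
  obtain ⟨hgap, hstep⟩ := hG.gap_of_adj_of_ne h he
  have hut : (u.2 : ℕ) ≠ t := fun ht => hu ⟨ht, by tauto⟩
  have hvt : (v.2 : ℕ) ≠ t := fun ht => hv ⟨ht, by tauto⟩
  rcases Nat.lt_or_gt_of_ne hut with h | h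
  · rw [compare_lt_iff_lt.2 h, compare_lt_iff_lt.2 (by omega)]
  · rw [compare_gt_iff_gt.2 h, compare_gt_iff_gt.2 (by omega)]

theorem IsForestGapCycle.encard_outerNbhd_le_two (hG : IsForestGapCycle G)
    {S : Set (Fin n × Fin m)} (hS : (G.induce S).Connected) (c : Fin m)
    (hSc : ∀ v ∈ S, v.2 = c ∧ v.1 ≠ 0 ∧ v.1 ≠ 1) : (G.outerNbhd S).encard ≤ 2 := by
  refine encard_outerNbhd_le_two_of_injOn hS strandPos
    (fun u hu v huv => hG.strandPos_adj huv (hSc u hu).2.1 (hSc u hu).2.2) ?_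
  have hlevel : ∀ v ∈ S ∪ G.outerNbhd S, v.2 = c := by
    rintro v (hv | ⟨-, u, hu, huv⟩)
    · exact (hSc v hv).1
    · exact (hG.snd_eq_of_adj huv (hSc u hu).2.1 (hSc u hu).2.2).trans (hSc u hu).1
  intro v hv w hw hvw
  refine Prod.ext ?_ ((hlevel v hv).trans (hlevel w hw).symm)
  simpa [strandPos] using Fin.ext hvw

theorem IsForestGapCycle.lt_of_disjoint_gapAt (hG : IsForestGapCycle G)
    {β : Fin 4 → Set (Fin n × Fin m)} (hconn : ∀ k, (G.induce (β k)).Connected)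
    (hdisj : Pairwise (Function.onFun Disjoint β))
    (hadj : ∀ ⦃i j⦄, (completeGraph (Fin 4)).Adj i j → ∃ u ∈ β i, ∃ v ∈ β j, G.Adj u v)
    {t : ℕ} (hreach : ∀ k, ∃ v ∈ β k, t ≤ v.2) {k : Fin 4} (hk : Disjoint (β k) (gapAt t))
    {v : Fin n × Fin m} (hv : v ∈ β k) : t < v.2 := by
  have hcmp : ∀ w ∈ β k, compare (w.2 : ℕ) t = compare (v.2 : ℕ) t :=
    fun w hw => eq_of_preconnected_induce (hconn k).preconnected _
      (fun x hx y hy hxy => hG.compare_eq_of_adj hxy (Set.disjoint_left.1 hk hx)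
        (Set.disjoint_left.1 hk hy)) hw hv
  obtain ⟨w, hw, htw⟩ := hreach k
  rcases lt_trichotomy (v.2 : ℕ) t with hlt | heq | hgt
  · have := hcmp w hw
    rw [compare_lt_iff_lt.2 hlt, compare_lt_iff_lt] at this
    omega
  · have hlevel : ∀ x ∈ β k, x.2 = v.2 ∧ x.1 ≠ 0 ∧ x.1 ≠ 1 := by
      intro x hx
      have hxt : (x.2 : ℕ) = t := by
        have := hcmp x hx
        rwa [heq, compare_eq_iff_eq.2 rfl, compare_eq_iff_eq] at this
      exact ⟨Fin.ext (hxt.trans heq.symm), fun h => Set.disjoint_left.1 hk hx ⟨hxt, .inl h⟩,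
        fun h => Set.disjoint_left.1 hk hx ⟨hxt, .inr h⟩⟩
    have := (three_le_encard_outerNbhd hdisj hadj k).trans
      (hG.encard_outerNbhd_le_two (hconn k) v.2 hlevel)
    norm_num at this
  · exact hgt

theorem IsForestGapCycle.not_hasMinor_completeGraph_four (hG : IsForestGapCycle G) :
    ¬ G.HasMinor (completeGraph (Fin 4)) := by
  rintro ⟨β, hconn, hdisj, hadj⟩
  obtain ⟨k₀, t, hk₀, hreach⟩ :=
    exists_minimax_level β (fun k => (hconn k).nonempty.elim fun v => ⟨v, v.2⟩) fun v => (v.2 : ℕ)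
  let Reaches (k : Fin 4) (s : Fin n × Fin m) : Prop :=
    s ∈ β k ∨ (s ∈ β k₀ ∧ ∃ v ∈ β k, G.Adj s v ∧ (v.2 : ℕ) = t + 1)
  have hreaches : ∀ k ≠ k₀, ∃ s ∈ gapAt t, Reaches k s := by
    intro k hk
    by_cases hmeet : Disjoint (β k) (gapAt t)
    · obtain ⟨s, hs, v, hv, hsv⟩ := hadj hk.symm
      have hst := hk₀ s hs
      have htv := hG.lt_of_disjoint_gapAt hconn hdisj hadj hreach hmeet hv
      obtain ⟨hgap, hstep⟩ := hG.gap_of_adj_of_ne hsv (by omega)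
      exact ⟨s, ⟨by omega, by tauto⟩, .inr ⟨hs, v, hv, hsv, by omega⟩⟩
    · obtain ⟨s, hsk, hst⟩ := Set.not_disjoint_iff.1 hmeet
      exact ⟨s, hst, .inl hsk⟩
  have hexcl : ∀ i ≠ k₀, ∀ j ≠ k₀, i ≠ j → ∀ s, Reaches i s → Reaches j s → False := by
    rintro i hi j hj hij s (hsi | ⟨hs, v, hv, hsv, hvt⟩) (hsj | ⟨hs', w, hw, hsw, hwt⟩)
    · exact Set.disjoint_left.1 (hdisj hij) hsi hsj
    · exact Set.disjoint_left.1 (hdisj hi) hsi hs'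
    · exact Set.disjoint_left.1 (hdisj hj) hsj hs
    · have hvw := hG.eq_of_adj_of_adj hsv hsw (Fin.ext (hvt.trans hwt.symm))
        (by have := hk₀ s hs; omega)
      exact Set.disjoint_left.1 (hdisj hij) hv (hvw ▸ hw)
  have := (three_le_encard_of_exclusive k₀ Reaches hreaches hexcl).trans (encard_gapAt_le_two t)
  norm_num at this

end ForestGapCycle

theorem stmt13_general (n m : ℕ) [NeZero n] (G : SimpleGraph (Fin n × Fin m))
    (hG : ∀ p q : Fin n × Fin m, G.Adj p q →
      (q.1 = p.1 + 1 ∨ p.1 = q.1 + 1) ∧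
      (((p.1 = (1 : Fin n) ∧ q.1 = 0) ∨ (q.1 = (1 : Fin n) ∧ p.1 = 0)) →
        ((q.2 : ℕ) = (p.2 : ℕ) + 1 ∨ (p.2 : ℕ) = (q.2 : ℕ) + 1)) ∧
      (¬((p.1 = (1 : Fin n) ∧ q.1 = 0) ∨ (q.1 = (1 : Fin n) ∧ p.1 = 0)) → p.2 = q.2)) :
    G.IsPlanar := by
  have hK₄ : ¬ G.HasMinor (completeGraph (Fin 4)) :=
    IsForestGapCycle.not_hasMinor_completeGraph_four hG
  exact ⟨fun h => hK₄ h.completeGraph_four_of_five,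
    fun h => hK₄ h.completeGraph_four_of_completeBipartiteGraph⟩

/-- Let `G` be a graph on vertex classes `V₀, …, V_{n−1}` (each of size
`m`) arranged in a cycle, with edges only between consecutive classes, all of them
'parallel' (`v_{i,j} — v_{i,j±1}`), except between class `1` and class `0`, where the
edges follow the shifted forest mapping pattern `u_i — v_{i+1,0}`. Then `G` is planar. -/
theorem stmt13 (n m : ℕ) [NeZero n] [NeZero m] (G : SimpleGraph (Fin n × Fin m))
    (hG : ∀ p q : Fin n × Fin m, G.Adj p q →
      (q.1 = p.1 + 1 ∨ p.1 = q.1 + 1) ∧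
      (((p.1 = (1 : Fin n) ∧ q.1 = 0) ∨ (q.1 = (1 : Fin n) ∧ p.1 = 0)) →
        ((q.2 : ℕ) = (p.2 : ℕ) + 1 ∨ (p.2 : ℕ) = (q.2 : ℕ) + 1)) ∧
      (¬((p.1 = (1 : Fin n) ∧ q.1 = 0) ∨ (q.1 = (1 : Fin n) ∧ p.1 = 0)) → p.2 = q.2)) :
    G.IsPlanar :=
  stmt13_general n m G hG
end
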